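/- Let g be a Λ-tight generalization of s = λx:α.λy:α. f(x) and t = λx:α.λy:α. f(y), let (σ₁,σ₂) ∈ GS_gnd(s,t,g), and let Y be a fresh free variable. Then the (g,Λ_sp)-pseudo-pattern G_{Λ_sp}(g,Z,Y,σ₁,σ₂) is a superpattern, i.e., an element of Λ_sp. -/

import Mathlib

/-!
Anti-unification over the simply-typed lambda calculus (Cerna & Buran).

We fix one base type `α` (`Ty.base`) and a signature that contains, for every
simple type `τ`, constants `Tm.const n τ` (so in particular a constant
`f : α → α`, namely `fC = Tm.const 0 (α → α)`).  Terms use de Bruijn indices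
for bound variables (so `=_α` is definitional) and named, type-annotated free
variables.  Substitutions are type-preserving finite maps from free variables
to (locally closed) terms; since the terms in their range are locally closed,
application of a substitution is automatically capture-avoiding.
-/

namespace AU

inductive Ty : Type where
  | base : Ty
  | arr : Ty → Ty → Ty
deriving DecidableEq

inductive Tm : Type where
  | bvar : ℕ → Tm
  | fvar : ℕ → Ty → Tm
  | const : ℕ → Ty → Tm
  | lam : Ty → Tm → Tm
  | app : Tm → Tm → Tm
deriving DecidableEq

/-- `mkArrow [γ₁,…,γₘ] ρ = γ₁ → ⋯ → γₘ → ρ`. -/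
def mkArrow : List Ty → Ty → Ty
  | [], ρ => ρ
  | τ :: rest, ρ => Ty.arr τ (mkArrow rest ρ)

/-- Shift de Bruijn indices `≥ c` up by `d`. -/
def shift (d : ℕ) : ℕ → Tm → Tm
  | c, Tm.bvar i => if i < c then Tm.bvar i else Tm.bvar (i + d)
  | _, Tm.fvar n τ => Tm.fvar n τ
  | _, Tm.const n τ => Tm.const n τ
  | c, Tm.lam τ t => Tm.lam τ (shift d (c + 1) t)
  | c, Tm.app t u => Tm.app (shift d c t) (shift d c u)

/-- Substitute `u` for the bound variable `k` in `t` (for β-reduction). -/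
def bsubst : Tm → ℕ → Tm → Tm
  | Tm.bvar i, k, u => if i = k then u else if k < i then Tm.bvar (i - 1) else Tm.bvar i
  | Tm.fvar n τ, _, _ => Tm.fvar n τ
  | Tm.const n τ, _, _ => Tm.const n τ
  | Tm.lam τ t, k, u => Tm.lam τ (bsubst t (k + 1) (shift 1 0 u))
  | Tm.app a b, k, u => Tm.app (bsubst a k u) (bsubst b k u)

/-- Simple typing. Free variables and constants carry their type. -/
inductive HasType : List Ty → Tm → Ty → Prop where
  | bvar {Γ i τ} : Γ[i]? = some τ → HasType Γ (Tm.bvar i) τ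
  | fvar {Γ n τ} : HasType Γ (Tm.fvar n τ) τ
  | const {Γ n τ} : HasType Γ (Tm.const n τ) τ
  | lam {Γ τ ρ t} : HasType (τ :: Γ) t ρ → HasType Γ (Tm.lam τ t) (Ty.arr τ ρ)
  | app {Γ t u τ ρ} : HasType Γ t (Ty.arr τ ρ) → HasType Γ u τ → HasType Γ (Tm.app t u) ρ

/-- `=_{αβη}`: equality modulo α (definitional), β and η. -/
inductive AbeEq : Tm → Tm → Prop where
  | refl (t) : AbeEq t t
  | symm {t u} : AbeEq t u → AbeEq u t
  | trans {t u v} : AbeEq t u → AbeEq u v → AbeEq t v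
  | beta (τ t u) : AbeEq (Tm.app (Tm.lam τ t) u) (bsubst t 0 u)
  | eta (τ t) : AbeEq (Tm.lam τ (Tm.app (shift 1 0 t) (Tm.bvar 0))) t
  | lam {τ t u} : AbeEq t u → AbeEq (Tm.lam τ t) (Tm.lam τ u)
  | app {t t' u u'} : AbeEq t t' → AbeEq u u' → AbeEq (Tm.app t u) (Tm.app t' u')

/-- One step of η-reduction (congruent closure). -/
inductive EtaStep : Tm → Tm → Prop where
  | eta (τ t) : EtaStep (Tm.lam τ (Tm.app (shift 1 0 t) (Tm.bvar 0))) t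
  | lam {τ t u} : EtaStep t u → EtaStep (Tm.lam τ t) (Tm.lam τ u)
  | appL {t t' u} : EtaStep t t' → EtaStep (Tm.app t u) (Tm.app t' u)
  | appR {t u u'} : EtaStep u u' → EtaStep (Tm.app t u) (Tm.app t u')

def EtaRed : Tm → Tm → Prop := Relation.ReflTransGen EtaStep
def EtaNormal (t : Tm) : Prop := ∀ u, ¬ EtaStep t u
/-- `IsEtaNF t t'` : `t'` is the η-normal form `t↓_η` of `t`. -/
def IsEtaNF (t t' : Tm) : Prop := EtaRed t t' ∧ EtaNormal t'

inductive BetaStep : Tm → Tm → Prop where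
  | beta (τ t u) : BetaStep (Tm.app (Tm.lam τ t) u) (bsubst t 0 u)
  | lam {τ t u} : BetaStep t u → BetaStep (Tm.lam τ t) (Tm.lam τ u)
  | appL {t t' u} : BetaStep t t' → BetaStep (Tm.app t u) (Tm.app t' u)
  | appR {t u u'} : BetaStep u u' → BetaStep (Tm.app t u) (Tm.app t u')

def BetaEtaStep (t u : Tm) : Prop := BetaStep t u ∨ EtaStep t u
def BetaEtaRed : Tm → Tm → Prop := Relation.ReflTransGen BetaEtaStep
def BetaEtaNormal (t : Tm) : Prop := ∀ u, ¬ BetaEtaStep t u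

/-- The head of a term: `head (λx.t) = λx.`, `head (h(s₁,…,sₘ)) = h`. -/
inductive Head : Type where
  | lam : Ty → Head
  | bvar : ℕ → Head
  | fvar : ℕ → Ty → Head
  | const : ℕ → Ty → Head
deriving DecidableEq

def headOf : Tm → Head
  | Tm.bvar i => Head.bvar i
  | Tm.fvar n τ => Head.fvar n τ
  | Tm.const n τ => Head.const n τ
  | Tm.lam τ _ => Head.lam τ
  | Tm.app t _ => headOf t

/-- Number of occurrences of the free variable `(n : τ)` in a term. -/
def occFV (n : ℕ) (τ : Ty) : Tm → ℕ
  | Tm.bvar _ => 0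
  | Tm.fvar m ρ => if m = n ∧ ρ = τ then 1 else 0
  | Tm.const _ _ => 0
  | Tm.lam _ t => occFV n τ t
  | Tm.app a b => occFV n τ a + occFV n τ b

/-- A term containing no free variables (ground). -/
def NoFV : Tm → Prop
  | Tm.bvar _ => True
  | Tm.fvar _ _ => False
  | Tm.const _ _ => True
  | Tm.lam _ t => NoFV t
  | Tm.app a b => NoFV a ∧ NoFV b

/-- A strict upper bound on the names of free variables occurring in a term. -/
def fvBound : Tm → ℕ
  | Tm.bvar _ => 0
  | Tm.fvar n _ => n + 1
  | Tm.const _ _ => 0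
  | Tm.lam _ t => fvBound t
  | Tm.app a b => max (fvBound a) (fvBound b)

/-- Apply a (total) map from free variables to terms. -/
def applyMap (σ : ℕ → Ty → Tm) : Tm → Tm
  | Tm.bvar i => Tm.bvar i
  | Tm.fvar n τ => σ n τ
  | Tm.const n τ => Tm.const n τ
  | Tm.lam τ t => Tm.lam τ (applyMap σ t)
  | Tm.app a b => Tm.app (applyMap σ a) (applyMap σ b)

/-- A substitution: a type-preserving map from free variables to locally
closed terms, equal to the identity outside a finite domain.  Since the terms
in its range are locally closed, application is capture-avoiding. -/
structure Subst where
  map : ℕ → Ty → Tm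
  wt : ∀ n τ, HasType [] (map n τ) τ
  fin : {p : ℕ × Ty | map p.1 p.2 ≠ Tm.fvar p.1 p.2}.Finite

def Subst.apply (σ : Subst) (t : Tm) : Tm := applyMap σ.map t

def idSubst : Subst where
  map := fun n τ => Tm.fvar n τ
  wt := fun _ _ => HasType.fvar
  fin := by
    have h : {p : ℕ × Ty | Tm.fvar p.1 p.2 ≠ Tm.fvar p.1 p.2} = ∅ := by ext p; simp
    rw [h]; exact Set.finite_empty

def Subst.update (σ : Subst) (n : ℕ) (τ : Ty) (u : Tm) (hu : HasType [] u τ) : Subst where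
  map := fun m ρ => if m = n ∧ ρ = τ then u else σ.map m ρ
  wt := by
    intro m ρ
    try dsimp only
    by_cases h : m = n ∧ ρ = τ
    · rw [if_pos h]
      obtain ⟨-, rfl⟩ := h
      exact hu
    · rw [if_neg h]; exact σ.wt m ρ
  fin := by
    apply (σ.fin.insert (n, τ)).subset
    intro p hp
    simp only [Set.mem_setOf_eq] at hp
    by_cases h : p = (n, τ)
    · exact h ▸ Set.mem_insert _ _
    · have hne : ¬ (p.1 = n ∧ p.2 = τ) := by
        intro hc
        apply h
        cases p
        exact Prod.ext hc.1 hc.2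
      rw [if_neg hne] at hp
      exact Set.mem_insert_of_mem _ hp

/-- A ground substitution: terms in its range contain no free variables. -/
def Subst.Ground (σ : Subst) : Prop :=
  ∀ n τ, σ.map n τ ≠ Tm.fvar n τ → NoFV (σ.map n τ)

/-- The base type `α`, the types `α → α` and `α → α → α`. -/
def tyFF : Ty := Ty.arr Ty.base Ty.base
def ty2 : Ty := Ty.arr Ty.base (Ty.arr Ty.base Ty.base)

/-- The constant `f : α → α`. -/
def fC : Tm := Tm.const 0 tyFF

/-- `s = λx:α.λy:α. f(x)`. -/
def sTerm : Tm := Tm.lam Ty.base (Tm.lam Ty.base (Tm.app fC (Tm.bvar 1)))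
/-- `t = λx:α.λy:α. f(y)`. -/
def tTerm : Tm := Tm.lam Ty.base (Tm.lam Ty.base (Tm.app fC (Tm.bvar 0)))

/-- `appList h [s₁,…,sₘ] = h s₁ … sₘ`. -/
def appList (h : Tm) (args : List Tm) : Tm := args.foldl Tm.app h
/-- `mkLams [τ₁,…,τₘ] t = λb₁:τ₁…λbₘ:τₘ. t`. -/
def mkLams (τs : List Ty) (t : Tm) : Tm := τs.foldr Tm.lam t
/-- `appBVars h m = h bₘ₋₁ … b₀` : apply `h` to the `m` innermost binders. -/
def appBVars (h : Tm) (m : ℕ) : Tm :=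
  ((List.range m).reverse).foldl (fun acc i => Tm.app acc (Tm.bvar i)) h

inductive SubtermOf : Tm → Tm → Prop where
  | refl (t) : SubtermOf t t
  | lam {u τ t} : SubtermOf u t → SubtermOf u (Tm.lam τ t)
  | appL {u t v} : SubtermOf u t → SubtermOf u (Tm.app t v)
  | appR {u t v} : SubtermOf u v → SubtermOf u (Tm.app t v)

/-- The η-normal form of an argument of a free variable in a superpattern is a
bound variable or has a free-variable head. -/
def ArgOK (s : Tm) : Prop :=
  ∀ s', IsEtaNF s s' →
    (∃ i, s' = Tm.bvar i) ∨ (∃ n ρ, headOf s' = Head.fvar n ρ)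

/-- Superpatterns (Definition `superpattern`): for every subterm occurrence
`X(s₁,…,sₘ)` headed by a free variable, every argument is (in η-normal form)
a bound variable or free-variable-headed, and the bound-variable arguments
are pairwise distinct. -/
def IsSuperpattern (t : Tm) : Prop :=
  ∀ u, SubtermOf u t → ∀ X τ args, u = appList (Tm.fvar X τ) args →
    (∀ s ∈ args, ArgOK s) ∧
    (∀ (i j : ℕ) (hi : i < args.length) (hj : j < args.length) (si' sj' : Tm),
       IsEtaNF (args[i]'hi) si' → IsEtaNF (args[j]'hj) sj' →
       (∃ a, si' = Tm.bvar a) → si' = sj' → i = j)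

/-- The class `Λ` of all (simply-typed) λ-terms. -/
def ΛAll : Tm → Prop := fun _ => True

/-- `g` is an `L`-generalization of `s = λx,y.f(x)` and `t = λx,y.f(y)`. -/
def Gen (L : Tm → Prop) (g : Tm) : Prop :=
  L g ∧ HasType [] g ty2 ∧
  ∃ σ₁ σ₂ : Subst, AbeEq (σ₁.apply g) sTerm ∧ AbeEq (σ₂.apply g) tTerm

/-- The instantiation quasi-order `g ≤ g'` : `gσ =_{αβη} g'` for some `σ`.
(The same relation defines `≤_Λ` and `≤_{Λ_sp}`.) -/
def LeGen (g g' : Tm) : Prop := ∃ σ : Subst, AbeEq (σ.apply g) g'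

/-- `C` is a complete set of `L`-generalizations of `s` and `t`. -/
def CompleteSet (L : Tm → Prop) (C : Set Tm) : Prop :=
  (∀ g ∈ C, Gen L g) ∧ ∀ g', Gen L g' → ∃ g ∈ C, LeGen g' g

def zVar : ℕ := 0

/-- The pattern generalization `λx:α.λy:α. f(Z(x,y))` with `Z : α → α → α`. -/
def patternG : Tm :=
  Tm.lam Ty.base (Tm.lam Ty.base
    (Tm.app fC (Tm.app (Tm.app (Tm.fvar zVar ty2) (Tm.bvar 1)) (Tm.bvar 0))))

/-- `L`-pattern-derived generalizations: `λx.λy.f(Z(x,y)) ≤_L g`. -/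
def PatternDerived (L : Tm → Prop) (g : Tm) : Prop := Gen L g ∧ LeGen patternG g

/-- `(σ₁,σ₂) ∈ GS_gnd(s,t,g)` : generalizing substitutions with ground ranges. -/
def GSgnd (g : Tm) (σ₁ σ₂ : Subst) : Prop :=
  AbeEq (σ₁.apply g) sTerm ∧ AbeEq (σ₂.apply g) tTerm ∧ σ₁.Ground ∧ σ₂.Ground

/-- `subst1 n τ u` is the substitution `{(n:τ) ↦ u}` (as a syntactic map). -/
def subst1 (n : ℕ) (τ : Ty) (u : Tm) : Tm → Tm
  | Tm.bvar i => Tm.bvar i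
  | Tm.fvar m ρ => if m = n ∧ ρ = τ then u else Tm.fvar m ρ
  | Tm.const m ρ => Tm.const m ρ
  | Tm.lam ρ t => Tm.lam ρ (subst1 n τ u t)
  | Tm.app a b => Tm.app (subst1 n τ u a) (subst1 n τ u b)

/-- The two conditions of Definition `patternDerived` (`L`-tightness): no free
variable `W` of `g` can be eliminated by a projection, nor by substituting its
image under a pair of ground generalizing substitutions, while remaining a
generalization. -/
def TightCond (L : Tm → Prop) (g : Tm) : Prop :=
  ∀ W τ, occFV W τ g ≠ 0 →
    (∀ (γs : List Ty) (i : ℕ) (hi : i < γs.length),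
        τ = mkArrow γs (γs[i]'hi) →
        ¬ Gen L (subst1 W τ (mkLams γs (Tm.bvar (γs.length - 1 - i))) g)) ∧
    (∀ σ₁ σ₂ : Subst, GSgnd g σ₁ σ₂ →
        ¬ Gen L (subst1 W τ (σ₁.map W τ) g) ∧ ¬ Gen L (subst1 W τ (σ₂.map W τ) g))

/-- `L`-tight generalizations. -/
def IsTight (L : Tm → Prop) (g : Tm) : Prop := PatternDerived L g ∧ TightCond L g

/-- The projections `λw₁.λw₂.w₁` and `λw₁.λw₂.w₂` of type `α → α → α`. -/
def proj1 : Tm := Tm.lam Ty.base (Tm.lam Ty.base (Tm.bvar 1))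
def proj2 : Tm := Tm.lam Ty.base (Tm.lam Ty.base (Tm.bvar 0))

theorem proj1_wt : HasType [] proj1 ty2 :=
  HasType.lam (HasType.lam (HasType.bvar rfl))
theorem proj2_wt : HasType [] proj2 ty2 :=
  HasType.lam (HasType.lam (HasType.bvar rfl))

/-- `λb₁…bₘ. Y (r₁ b₁ … bₘ) (r₂ b₁ … bₘ)` with `Y : α → α → α`. -/
def pseudoBody (Y : ℕ) (δs : List Ty) (r₁ r₂ : Tm) : Tm :=
  mkLams δs (Tm.app (Tm.app (Tm.fvar Y ty2) (appBVars (shift δs.length 0 r₁) δs.length))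
                    (appBVars (shift δs.length 0 r₂) δs.length))

/-- The shape `λx:α.λy:α. f(Z(s₁,…,sₘ))` of a `Λ`-tight generalization, where
`Z : δ₁ → ⋯ → δₘ → α`. -/
def tightForm (z : ℕ) (δs : List Ty) (args : List Tm) : Tm :=
  Tm.lam Ty.base (Tm.lam Ty.base
    (Tm.app fC (appList (Tm.fvar z (mkArrow δs Ty.base)) args)))

/-- The argument of `f` in the `(g,Λ)`-pseudo-pattern `G_Λ(g,Z,Y,σ₁,σ₂)`. -/
def pseudoArg (z Y : ℕ) (δs : List Ty) (args : List Tm) (r₁ r₂ : Tm) : Tm :=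
  subst1 z (mkArrow δs Ty.base) (pseudoBody Y δs r₁ r₂)
    (appList (Tm.fvar z (mkArrow δs Ty.base)) args)

/-- The `(g,Λ)`-pseudo-pattern `G_Λ(g,Z,Y,σ₁,σ₂) = g{Z ↦ λb̄. Y(r₁ b̄, r₂ b̄)}`. -/
def pseudoPat (z Y : ℕ) (δs : List Ty) (args : List Tm) (r₁ r₂ : Tm) : Tm :=
  Tm.lam Ty.base (Tm.lam Ty.base (Tm.app fC (pseudoArg z Y δs args r₁ r₂)))

/-- Subterm at a (binary-tree) position. -/
def subAt : Tm → List ℕ → Option Tm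
  | t, [] => some t
  | Tm.lam _ t, 0 :: p => subAt t p
  | Tm.app a _, 0 :: p => subAt a p
  | Tm.app _ b, 1 :: p => subAt b p
  | _, _ => none

/-- Replace the subterm at a position (identity on invalid positions). -/
def replaceAt : Tm → List ℕ → Tm → Tm
  | _, [], u => u
  | Tm.lam τ t, 0 :: p, u => Tm.lam τ (replaceAt t p u)
  | Tm.app a b, 0 :: p, u => Tm.app (replaceAt a p u) b
  | Tm.app a b, 1 :: p, u => Tm.app a (replaceAt b p u)
  | t, _, _ => t

def inferTy : List Ty → Tm → Option Ty
  | Γ, Tm.bvar i => Γ[i]?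
  | _, Tm.fvar _ τ => some τ
  | _, Tm.const _ τ => some τ
  | Γ, Tm.lam τ t => (inferTy (τ :: Γ) t).map (Ty.arr τ)
  | Γ, Tm.app a b =>
      match inferTy Γ a, inferTy Γ b with
      | some (Ty.arr τ ρ), some τ' => if τ = τ' then some ρ else none
      | _, _ => none

/-- `(Σ,w̄)`-representative positions: the η-normal form of the subterm is
headed by a constant of `Σ` or an abstraction. -/
def RepPos (r : Tm) (q : List ℕ) : Prop :=
  ∃ u u', subAt r q = some u ∧ IsEtaNF u u' ∧
    ((∃ τ, headOf u' = Head.lam τ) ∨ (∃ n τ, headOf u' = Head.const n τ))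

/-- `(Σ,w̄)`-maximal positions: representative, with no representative
position strictly above. -/
def MaxPos (r : Tm) (q : List ℕ) : Prop :=
  RepPos r q ∧ ∀ p, p <+: q → p ≠ q → ¬ RepPos r p

/-- The term `H(x,y)` replacing a maximal subterm of `r` during lifting, where
`H : α → α → ν_q` and `ν_q` is the type of the subterm of `r` at `q`. -/
def liftReplacement (r : Tm) (q : List ℕ) (H : ℕ) : Tm :=
  Tm.app (Tm.app (Tm.fvar H (Ty.arr Ty.base (Ty.arr Ty.base
    ((inferTy [Ty.base, Ty.base] ((subAt r q).getD r)).getD Ty.base)))) (Tm.bvar 1)) (Tm.bvar 0)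

/-- `LiftOf avoid r r'` : `r'` is obtained from `r` (the argument of `f`,
under the binders `x, y`) by replacing the subterm at each `(Σ,w̄)`-maximal
position by `H_q(x,y)` for pairwise distinct fresh free variables `H_q`
(all names `≥ avoid`). -/
def LiftOf (avoid : ℕ) (r r' : Tm) : Prop :=
  ∃ (qs : List (List ℕ)) (names : List ℕ),
    qs.Nodup ∧ names.Nodup ∧ names.length = qs.length ∧
    (∀ n ∈ names, avoid ≤ n) ∧
    (∀ q, q ∈ qs ↔ MaxPos r q) ∧
    r' = (qs.zip names).foldl (fun acc p => replaceAt acc p.1 (liftReplacement r p.1 p.2)) r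

/-- `λw₁.λw₂. Y(Y(w₁,w₂),Y(w₁,w₂))`. -/
def dupTm (Y : ℕ) : Tm :=
  Tm.lam Ty.base (Tm.lam Ty.base
    (Tm.app (Tm.app (Tm.fvar Y ty2)
              (Tm.app (Tm.app (Tm.fvar Y ty2) (Tm.bvar 1)) (Tm.bvar 0)))
            (Tm.app (Tm.app (Tm.fvar Y ty2) (Tm.bvar 1)) (Tm.bvar 0))))

/-- The singleton substitution `{(n:τ) ↦ u}`. -/
def single (n : ℕ) (τ : Ty) (u : Tm) (hu : HasType [] u τ) : Subst :=
  idSubst.update n τ u hu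

/-- `λx.λy. f(R(x,y))` (with `R` the free variable `zVar : α → α → α`). -/
def pat1 : Tm := patternG

/-- `λx.λy. f(R(R(x,y),R(x,y)))`. -/
def pat2 : Tm :=
  Tm.lam Ty.base (Tm.lam Ty.base (Tm.app fC
    (Tm.app (Tm.app (Tm.fvar zVar ty2)
              (Tm.app (Tm.app (Tm.fvar zVar ty2) (Tm.bvar 1)) (Tm.bvar 0)))
            (Tm.app (Tm.app (Tm.fvar zVar ty2) (Tm.bvar 1)) (Tm.bvar 0)))))

/-! ### Auxiliary lemmas -/

/-- Size of a term. -/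
def sz : Tm → ℕ
  | Tm.bvar _ => 1
  | Tm.fvar _ _ => 1
  | Tm.const _ _ => 1
  | Tm.lam _ t => sz t + 1
  | Tm.app a b => sz a + sz b + 1

lemma sz_shift (t : Tm) : ∀ d c, sz (shift d c t) = sz t := by
  induction t with
  | bvar i => intro d c; simp only [shift]; split <;> rfl
  | fvar n τ => intros; rfl
  | const n τ => intros; rfl
  | lam τ t ih => intro d c; simp [shift, sz, ih]
  | app a b iha ihb => intro d c; simp [shift, sz, iha, ihb]

lemma etaStep_sz {t u : Tm} (h : EtaStep t u) : sz u < sz t := by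
  induction h with
  | eta τ t => simp [sz, sz_shift]; omega
  | lam h ih => simp [sz]; omega
  | appL h ih => simp [sz]; omega
  | appR h ih => simp [sz]; omega

lemma exists_etanf (t : Tm) : ∃ t', IsEtaNF t t' := by
  by_cases h : ∃ u, EtaStep t u
  · obtain ⟨u, hu⟩ := h
    have hlt := etaStep_sz hu
    obtain ⟨t', h1, h2⟩ := exists_etanf u
    exact ⟨t', Relation.ReflTransGen.head hu h1, h2⟩
  · push_neg at h
    exact ⟨t, Relation.ReflTransGen.refl, h⟩
termination_by sz t

lemma etaStep_headOf_fvar {t u : Tm} {n : ℕ} {ρ : Ty}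
    (h : EtaStep t u) (ht : headOf t = Head.fvar n ρ) : headOf u = Head.fvar n ρ := by
  induction h with
  | eta τ t => simp [headOf] at ht
  | lam h ih => simp [headOf] at ht
  | appL h ih => simpa [headOf] using ih (by simpa [headOf] using ht)
  | appR h ih => simpa [headOf] using ht

lemma etaRed_headOf_fvar {t u : Tm} {n : ℕ} {ρ : Ty}
    (h : EtaRed t u) (ht : headOf t = Head.fvar n ρ) : headOf u = Head.fvar n ρ := by
  induction h with
  | refl => exact ht
  | tail _ hstep ih => exact etaStep_headOf_fvar hstep ih

lemma etaRed_of_normal {t u : Tm} (hn : EtaNormal t) (h : EtaRed t u) : u = t := by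
  rcases (Relation.ReflTransGen.cases_head h) with rfl | ⟨v, hv, _⟩
  · rfl
  · exact absurd hv (hn v)

lemma etaNF_of_normal {t u : Tm} (hn : EtaNormal t) (h : IsEtaNF t u) : u = t :=
  etaRed_of_normal hn h.1

lemma etaNormal_bvar (i : ℕ) : EtaNormal (Tm.bvar i) := fun u h => by cases h
lemma etaNormal_fvar (n : ℕ) (τ : Ty) : EtaNormal (Tm.fvar n τ) := fun u h => by cases h

lemma etaNF_bvar {i : ℕ} {u : Tm} (h : IsEtaNF (Tm.bvar i) u) : u = Tm.bvar i :=
  etaNF_of_normal (etaNormal_bvar i) h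

/-- No dangling de Bruijn index `≥ c`. -/
def ClosedAt (c : ℕ) : Tm → Prop
  | Tm.bvar i => i < c
  | Tm.fvar _ _ => True
  | Tm.const _ _ => True
  | Tm.lam _ t => ClosedAt (c + 1) t
  | Tm.app a b => ClosedAt c a ∧ ClosedAt c b

lemma closedAt_unshift : ∀ (t : Tm) (c k : ℕ), k ≤ c →
    ClosedAt (c + 1) (shift 1 k t) → ClosedAt c t := by
  intro t
  induction t with
  | bvar i =>
      intro c k hk h
      simp only [shift] at h
      split at h <;> simp_all [ClosedAt] <;> omega
  | fvar n τ => intro c k hk h; trivial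
  | const n τ => intro c k hk h; trivial
  | lam τ t ih =>
      intro c k hk h
      exact ih (c + 1) (k + 1) (by omega) h
  | app a b iha ihb =>
      intro c k hk h
      exact ⟨iha c k hk h.1, ihb c k hk h.2⟩

lemma etaStep_closedAt {t u : Tm} (h : EtaStep t u) :
    ∀ c, ClosedAt c t → ClosedAt c u := by
  induction h with
  | eta τ t =>
      intro c hc
      exact closedAt_unshift t c 0 (Nat.zero_le c) hc.1
  | lam h ih => intro c hc; exact ih (c + 1) hc
  | appL h ih => intro c hc; exact ⟨ih c hc.1, hc.2⟩
  | appR h ih => intro c hc; exact ⟨hc.1, ih c hc.2⟩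

lemma etaRed_closedAt {t u : Tm} (h : EtaRed t u) (c : ℕ) (ht : ClosedAt c t) :
    ClosedAt c u := by
  induction h with
  | refl => exact ht
  | tail _ hstep ih => exact etaStep_closedAt hstep c ih

lemma noFV_shift : ∀ (t : Tm) (d c : ℕ), NoFV (shift d c t) ↔ NoFV t := by
  intro t
  induction t with
  | bvar i => intro d c; simp only [shift]; split <;> simp [NoFV]
  | fvar n τ => intro d c; simp [shift]
  | const n τ => intro d c; simp [shift]
  | lam τ t ih => intro d c; simp [shift, NoFV, ih]
  | app a b iha ihb => intro d c; simp [shift, NoFV, iha, ihb]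

lemma etaStep_noFV {t u : Tm} (h : EtaStep t u) (ht : NoFV t) : NoFV u := by
  induction h with
  | eta τ t => exact (noFV_shift t 1 0).mp ht.1
  | lam h ih => exact ih ht
  | appL h ih => exact ⟨ih ht.1, ht.2⟩
  | appR h ih => exact ⟨ht.1, ih ht.2⟩

lemma etaRed_noFV {t u : Tm} (h : EtaRed t u) (ht : NoFV t) : NoFV u := by
  induction h with
  | refl => exact ht
  | tail _ hstep ih => exact etaStep_noFV hstep ih

lemma closedAt_of_hasType : ∀ {Γ : List Ty} {t : Tm} {τ : Ty},
    HasType Γ t τ → ClosedAt Γ.length t := by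
  intro Γ t τ h
  induction h with
  | @bvar Γ i τ hi =>
      show i < Γ.length
      by_contra hc
      rw [List.getElem?_eq_none (by omega)] at hi
      cases hi
  | fvar => trivial
  | const => trivial
  | lam h ih => exact ih
  | app h1 h2 ih1 ih2 => exact ⟨ih1, ih2⟩

lemma head_of_closed_ground : ∀ (t : Tm), ClosedAt 0 t → NoFV t →
    (∃ τ, headOf t = Head.lam τ) ∨ (∃ n τ, headOf t = Head.const n τ) := by
  intro t
  induction t with
  | bvar i => intro hc; exact absurd hc (by simp [ClosedAt])
  | fvar n τ => intro _ hf; exact absurd hf (by simp [NoFV])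
  | const n τ => intro _ _; exact Or.inr ⟨n, τ, rfl⟩
  | lam τ t ih => intro _ _; exact Or.inl ⟨τ, rfl⟩
  | app a b iha ihb =>
      intro hc hf
      simpa [headOf] using iha hc.1 hf.1
lemma appList_nil (h : Tm) : appList h [] = h := rfl
lemma appList_cons (h x : Tm) (l : List Tm) :
    appList h (x :: l) = appList (Tm.app h x) l := rfl
lemma appList_concat (h x : Tm) (l : List Tm) :
    appList h (l ++ [x]) = Tm.app (appList h l) x := by
  simp [appList]

lemma headOf_appList : ∀ (l : List Tm) (h : Tm), headOf (appList h l) = headOf h := by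
  intro l
  induction l with
  | nil => intro h; rfl
  | cons x t ih =>
      intro h
      rw [appList_cons, ih]
      rfl

lemma appList_fvar_ne_lam {X : ℕ} {τ ρ : Ty} {as : List Tm} {t : Tm} :
    appList (Tm.fvar X τ) as ≠ Tm.lam ρ t := by
  intro h
  have := congrArg headOf h
  rw [headOf_appList] at this
  simp [headOf] at this

lemma appList_fvar_ne_app_const {X n : ℕ} {τ ρ : Ty} {as : List Tm} {t : Tm} :
    appList (Tm.fvar X τ) as ≠ Tm.app (Tm.const n ρ) t := by
  intro h
  have := congrArg headOf h
  rw [headOf_appList] at this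
  simp [headOf] at this

lemma appList_fvar_ne_const {X n : ℕ} {τ ρ : Ty} {as : List Tm} :
    appList (Tm.fvar X τ) as ≠ Tm.const n ρ := by
  intro h
  have := congrArg headOf h
  rw [headOf_appList] at this
  simp [headOf] at this

lemma appList_fvar_ne_bvar {X i : ℕ} {τ : Ty} {as : List Tm} :
    appList (Tm.fvar X τ) as ≠ Tm.bvar i := by
  intro h
  have := congrArg headOf h
  rw [headOf_appList] at this
  simp [headOf] at this

lemma appList_fvar_inv_atom {X n : ℕ} {τ σ : Ty} {as : List Tm}
    (h : appList (Tm.fvar X τ) as = Tm.fvar n σ) : as = [] ∧ X = n ∧ τ = σ := by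
  rcases as.eq_nil_or_concat with rfl | ⟨l, x, rfl⟩
  · rw [appList_nil] at h
    injection h with h1 h2
    exact ⟨rfl, h1, h2⟩
  · rw [List.concat_eq_append, appList_concat] at h
    cases h

lemma appList_fvar_inv_app {X : ℕ} {τ : Ty} {as : List Tm} {a b : Tm}
    (h : appList (Tm.fvar X τ) as = Tm.app a b) :
    ∃ l, as = l ++ [b] ∧ appList (Tm.fvar X τ) l = a := by
  rcases as.eq_nil_or_concat with rfl | ⟨l, x, rfl⟩
  · rw [appList_nil] at h; cases h
  · rw [List.concat_eq_append, appList_concat] at h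
    injection h with h1 h2
    exact ⟨l, by rw [h2]; exact List.concat_eq_append, h1⟩

lemma appList_fvar_inv_app2 {X n : ℕ} {τ σ : Ty} {as : List Tm} {A B : Tm}
    (h : appList (Tm.fvar X τ) as = Tm.app (Tm.app (Tm.fvar n σ) A) B) :
    X = n ∧ τ = σ ∧ as = [A, B] := by
  obtain ⟨l, rfl, h1⟩ := appList_fvar_inv_app h
  obtain ⟨l', rfl, h2⟩ := appList_fvar_inv_app h1
  obtain ⟨rfl, rfl, rfl⟩ := appList_fvar_inv_atom h2
  exact ⟨rfl, rfl, rfl⟩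

/-! ### Superpattern building blocks -/

lemma argOK_bvar (i : ℕ) : ArgOK (Tm.bvar i) := by
  intro s' h
  exact Or.inl ⟨i, etaNF_bvar h⟩

lemma argOK_of_normal_fvarhead {s : Tm} {n : ℕ} {ρ : Ty}
    (hn : EtaNormal s) (hh : headOf s = Head.fvar n ρ) : ArgOK s := by
  intro s' h
  rw [etaNF_of_normal hn h]
  exact Or.inr ⟨n, ρ, hh⟩

lemma isSuperpattern_lam {t : Tm} {τ : Ty} (h : IsSuperpattern t) :
    IsSuperpattern (Tm.lam τ t) := by
  intro u hu X ρ as heq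
  cases hu with
  | refl => exact absurd heq.symm appList_fvar_ne_lam
  | lam hsub => exact h u hsub X ρ as heq

lemma subtermOf_const {u : Tm} {n : ℕ} {τ : Ty} (h : SubtermOf u (Tm.const n τ)) :
    u = Tm.const n τ := by
  cases h; rfl

lemma isSuperpattern_fapp {t : Tm} (h : IsSuperpattern t) :
    IsSuperpattern (Tm.app fC t) := by
  intro u hu X ρ as heq
  cases hu with
  | refl => exact absurd heq.symm appList_fvar_ne_app_const
  | appL hsub =>
      rw [subtermOf_const hsub] at heq
      exact absurd heq.symm appList_fvar_ne_const
  | appR hsub => exact h u hsub X ρ as heq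

lemma isSuperpattern_fvar (n : ℕ) (τ : Ty) : IsSuperpattern (Tm.fvar n τ) := by
  intro u hu X ρ as heq
  cases hu
  obtain ⟨rfl, -, -⟩ := appList_fvar_inv_atom heq.symm
  refine ⟨?_, ?_⟩
  · intro s hs; cases hs
  · intro i j hi hj
    simp at hi

/-- Arguments that are acceptable under a free variable head: η-normal,
free-variable-headed superpatterns. -/
def NiceArg (A : Tm) : Prop :=
  EtaNormal A ∧ (∃ n ρ, headOf A = Head.fvar n ρ) ∧ IsSuperpattern A

lemma niceArg_fvar (n : ℕ) (τ : Ty) : NiceArg (Tm.fvar n τ) :=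
  ⟨etaNormal_fvar n τ, ⟨n, τ, rfl⟩, isSuperpattern_fvar n τ⟩

lemma niceArg_not_bvar {A : Tm} (h : NiceArg A) {s' : Tm} (hnf : IsEtaNF A s')
    (hb : ∃ a, s' = Tm.bvar a) : False := by
  obtain ⟨a, rfl⟩ := hb
  obtain ⟨n, ρ, hh⟩ := h.2.1
  rw [← etaNF_of_normal h.1 hnf] at hh
  simp [headOf] at hh

lemma isSuperpattern_HT (n : ℕ) (τ : Ty) :
    IsSuperpattern (Tm.app (Tm.app (Tm.fvar n τ) (Tm.bvar 1)) (Tm.bvar 0)) := by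
  intro u hu X ρ as heq
  cases hu with
  | refl =>
      obtain ⟨rfl, rfl, rfl⟩ := appList_fvar_inv_app2 heq.symm
      refine ⟨?_, ?_⟩
      · intro s hs
        simp at hs
        rcases hs with rfl | rfl <;> exact argOK_bvar _
      · intro i j hi hj si' sj' h1 h2 hb heqs
        simp only [List.length_cons, List.length_nil] at hi hj
        interval_cases i <;> interval_cases j <;>
            simp only [List.getElem_cons_zero, List.getElem_cons_succ] at h1 h2
        · rfl
        · rw [etaNF_bvar h1, etaNF_bvar h2] at heqs; simp at heqs
        · rw [etaNF_bvar h1, etaNF_bvar h2] at heqs; simp at heqs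
        · rfl
  | appL hsub =>
      cases hsub with
      | refl =>
          obtain ⟨l, rfl, h1⟩ := appList_fvar_inv_app heq.symm
          obtain ⟨rfl, -, -⟩ := appList_fvar_inv_atom h1
          refine ⟨?_, ?_⟩
          · intro s hs; simp at hs; rw [hs]; exact argOK_bvar _
          · intro i j hi hj si' sj' h1' h2' hb heqs
            simp at hi hj
            omega
      | appL hsub' =>
          cases hsub'
          obtain ⟨rfl, -, -⟩ := appList_fvar_inv_atom heq.symm
          refine ⟨?_, ?_⟩
          · intro s hs; cases hs
          · intro i j hi hj
            simp at hi
      | appR hsub' =>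
          cases hsub'
          exact absurd heq.symm appList_fvar_ne_bvar
  | appR hsub =>
      cases hsub
      exact absurd heq.symm appList_fvar_ne_bvar

lemma isSuperpattern_YAB {Yn : ℕ} {τY : Ty} {A B : Tm}
    (hA : NiceArg A) (hB : NiceArg B) :
    IsSuperpattern (Tm.app (Tm.app (Tm.fvar Yn τY) A) B) := by
  intro u hu X ρ as heq
  cases hu with
  | refl =>
      obtain ⟨rfl, rfl, rfl⟩ := appList_fvar_inv_app2 heq.symm
      refine ⟨?_, ?_⟩
      · intro s hs
        simp at hs
        rcases hs with rfl | rfl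
        · obtain ⟨n, ρ', hh⟩ := hA.2.1
          exact argOK_of_normal_fvarhead hA.1 hh
        · obtain ⟨n, ρ', hh⟩ := hB.2.1
          exact argOK_of_normal_fvarhead hB.1 hh
      · intro i j hi hj si' sj' h1 h2 hb heqs
        exfalso
        simp only [List.length_cons, List.length_nil] at hi hj
        interval_cases i <;>
            simp only [List.getElem_cons_zero, List.getElem_cons_succ] at h1
        · exact niceArg_not_bvar hA h1 ⟨hb.choose, hb.choose_spec⟩
        · exact niceArg_not_bvar hB h1 ⟨hb.choose, hb.choose_spec⟩
  | appL hsub =>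
      cases hsub with
      | refl =>
          obtain ⟨l, rfl, h1⟩ := appList_fvar_inv_app heq.symm
          obtain ⟨rfl, -, -⟩ := appList_fvar_inv_atom h1
          refine ⟨?_, ?_⟩
          · intro s hs
            simp at hs
            rw [hs]
            obtain ⟨n, ρ', hh⟩ := hA.2.1
            exact argOK_of_normal_fvarhead hA.1 hh
          · intro i j hi hj si' sj' h1' h2' hb heqs
            exfalso
            simp only [List.nil_append, List.length_cons, List.length_nil] at hi hj
            interval_cases i
            simp only [List.nil_append, List.getElem_cons_zero] at h1'
            exact niceArg_not_bvar hA h1' hb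
      | appL hsub' =>
          cases hsub'
          exact isSuperpattern_fvar Yn τY _ (SubtermOf.refl _) X ρ as heq
      | appR hsub' => exact hA.2.2 u hsub' X ρ as heq
  | appR hsub => exact hB.2.2 u hsub X ρ as heq
/-! ### Lambda-headed spines stable under η -/

/-- `λb̄.(A (B C))`-shaped terms: the innermost body's right child is an
application, so no η-redex can ever appear along the lambda spine. -/
inductive LamSpine : Tm → Prop where
  | one (τ : Ty) (A B C : Tm) : LamSpine (Tm.lam τ (Tm.app A (Tm.app B C)))
  | more (τ : Ty) {t : Tm} : LamSpine t → LamSpine (Tm.lam τ t)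

lemma lamSpine_is_lam {t : Tm} (h : LamSpine t) : ∃ τ s, t = Tm.lam τ s := by
  cases h with
  | one τ A B C => exact ⟨τ, _, rfl⟩
  | more τ h => exact ⟨τ, _, rfl⟩

lemma etaStep_app_is_app {a b u : Tm} (h : EtaStep (Tm.app a b) u) :
    ∃ a' b', u = Tm.app a' b' := by
  cases h with
  | appL h => exact ⟨_, _, rfl⟩
  | appR h => exact ⟨_, _, rfl⟩

lemma lamSpine_etaStep {t u : Tm} (ht : LamSpine t) (h : EtaStep t u) : LamSpine u := by
  induction ht generalizing u with
  | one τ A B C =>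
      cases h with
      | lam h' =>
          cases h' with
          | appL h'' => exact LamSpine.one _ _ _ _
          | appR h'' =>
              obtain ⟨a', b', rfl⟩ := etaStep_app_is_app h''
              exact LamSpine.one _ _ _ _
  | more τ hs ih =>
      cases h with
      | eta τ' t' =>
          obtain ⟨ρ, s, hls⟩ := lamSpine_is_lam hs
          simp_all
      | lam h' => exact LamSpine.more _ (ih h')

/-- Application spines over `LamSpine` terms. -/
inductive SpineLam : Tm → Prop where
  | base {t : Tm} : LamSpine t → SpineLam t
  | app {a : Tm} (b : Tm) : SpineLam a → SpineLam (Tm.app a b)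

lemma spineLam_etaStep {t u : Tm} (ht : SpineLam t) (h : EtaStep t u) : SpineLam u := by
  induction ht generalizing u with
  | base hl => exact SpineLam.base (lamSpine_etaStep hl h)
  | app b ha ih =>
      cases h with
      | appL h' => exact SpineLam.app _ (ih h')
      | appR h' => exact SpineLam.app _ ha

lemma spineLam_etaRed {t u : Tm} (ht : SpineLam t) (h : EtaRed t u) : SpineLam u := by
  induction h with
  | refl => exact ht
  | tail _ hstep ih => exact spineLam_etaStep ih hstep

lemma spineLam_head {t : Tm} (h : SpineLam t) : ∃ τ, headOf t = Head.lam τ := by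
  induction h with
  | base hl => obtain ⟨τ, s, rfl⟩ := lamSpine_is_lam hl; exact ⟨τ, rfl⟩
  | app b ha ih => simpa [headOf] using ih

lemma spineLam_appList : ∀ (l : List Tm) (h : Tm), SpineLam h → SpineLam (appList h l) := by
  intro l
  induction l with
  | nil => intro h hh; exact hh
  | cons x t ih =>
      intro h hh
      rw [appList_cons]
      exact ih _ (SpineLam.app _ hh)

lemma foldl_app_isApp : ∀ (l : List ℕ) (a b : Tm),
    ∃ a' b', (l.foldl (fun acc i => Tm.app acc (Tm.bvar i)) (Tm.app a b)) = Tm.app a' b' := by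
  intro l
  induction l with
  | nil => intro a b; exact ⟨a, b, rfl⟩
  | cons x t ih => intro a b; exact ih (Tm.app a b) (Tm.bvar x)

lemma appBVars_succ_isApp (h : Tm) (k : ℕ) :
    ∃ a b, appBVars h (k + 1) = Tm.app a b := by
  unfold appBVars
  rw [List.range_succ, List.reverse_append]
  simp only [List.reverse_singleton, List.singleton_append, List.foldl_cons]
  exact foldl_app_isApp _ h (Tm.bvar k)

lemma mkLams_cons (τ : Ty) (τs : List Ty) (t : Tm) :
    mkLams (τ :: τs) t = Tm.lam τ (mkLams τs t) := rfl

lemma lamSpine_mkLams : ∀ (rest : List Ty) (δ : Ty) (A B C : Tm),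
    LamSpine (mkLams (δ :: rest) (Tm.app A (Tm.app B C))) := by
  intro rest
  induction rest with
  | nil => intro δ A B C; exact LamSpine.one δ A B C
  | cons δ' rest' ih =>
      intro δ A B C
      rw [mkLams_cons]
      exact LamSpine.more δ (ih δ' A B C)

lemma subst1_appList (n : ℕ) (τ : Ty) (u : Tm) :
    ∀ (l : List Tm) (h : Tm),
      subst1 n τ u (appList h l) = appList (subst1 n τ u h) (l.map (subst1 n τ u)) := by
  intro l
  induction l with
  | nil => intro h; rfl
  | cons x t ih =>
      intro h
      rw [appList_cons, ih, List.map_cons, appList_cons]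
      rfl

lemma shift_zero : ∀ (t : Tm) (c : ℕ), shift 0 c t = t := by
  intro t
  induction t with
  | bvar i => intro c; simp only [shift]; split <;> simp
  | fvar n τ => intro c; rfl
  | const n τ => intro c; rfl
  | lam τ t ih => intro c; simp [shift, ih]
  | app a b iha ihb => intro c; simp [shift, iha, ihb]

/-! ### RepPos / MaxPos helpers -/

lemma not_rep_of_head_fvar {r : Tm} {q : List ℕ} {u : Tm} {n : ℕ} {ρ : Ty}
    (hs : subAt r q = some u) (hh : headOf u = Head.fvar n ρ) : ¬ RepPos r q := by
  rintro ⟨v, v', hv, ⟨hred, -⟩, hcase⟩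
  rw [hs] at hv
  obtain rfl := Option.some.inj hv
  have h' := etaRed_headOf_fvar hred hh
  rcases hcase with ⟨τ, h⟩ | ⟨m, τ, h⟩ <;> rw [h] at h' <;> cases h'

lemma not_rep_none {r : Tm} {q : List ℕ} (hs : subAt r q = none) : ¬ RepPos r q := by
  rintro ⟨v, v', hv, -, -⟩
  rw [hs] at hv
  cases hv

lemma not_max_of_ne_nil {r : Tm} {q : List ℕ} (hrep : RepPos r [])
    (hq : q ≠ []) : ¬ MaxPos r q := by
  rintro ⟨-, hmax⟩
  exact hmax [] (List.nil_prefix) (fun h => hq h.symm) hrep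

/-! ### List utilities -/

lemma list_eq_singleton {α : Type*} {l : List α} {a : α} (hn : l.Nodup)
    (h : ∀ x, x ∈ l ↔ x = a) : l = [a] := by
  have ha : a ∈ l := (h a).mpr rfl
  cases l with
  | nil => cases ha
  | cons b t =>
      have hba : b = a := (h b).mp (List.mem_cons_self)
      have ht : t = [] := by
        cases t with
        | nil => rfl
        | cons c t' =>
            have hc : c = a := (h c).mp (by simp)
            exact absurd (show b ∈ c :: t' by simp [hba, hc]) (List.nodup_cons.mp hn).1
      rw [ht, hba]

lemma list_eq_pair {α : Type*} {l : List α} {a b : α} (hn : l.Nodup) (hab : a ≠ b)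
    (h : ∀ x, x ∈ l ↔ (x = a ∨ x = b)) : l = [a, b] ∨ l = [b, a] := by
  have ha : a ∈ l := (h a).mpr (Or.inl rfl)
  have hb : b ∈ l := (h b).mpr (Or.inr rfl)
  cases l with
  | nil => cases ha
  | cons c t =>
      have hct : ∀ x ∈ t, x = a ∨ x = b := fun x hx => (h x).mp (by simp [hx])
      have hcn := List.nodup_cons.mp hn
      rcases (h c).mp (List.mem_cons_self) with rfl | rfl
      · left
        have hbt : b ∈ t := by
          rcases List.mem_cons.mp hb with rfl | h'
          · exact absurd rfl hab
          · exact h'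
        congr 1
        cases t with
        | nil => cases hbt
        | cons d t' =>
            rcases hct d (by simp) with rfl | rfl
            · exact absurd (by simp) hcn.1
            · have : t' = [] := by
                cases t' with
                | nil => rfl
                | cons e t'' =>
                    rcases hct e (by simp) with rfl | rfl
                    · exact absurd (by simp) hcn.1
                    · exact absurd (by simp) (List.nodup_cons.mp hcn.2).1
              rw [this]
      · right
        have hat : a ∈ t := by
          rcases List.mem_cons.mp ha with rfl | h'
          · exact absurd rfl hab.symm
          · exact h'
        congr 1
        cases t with
        | nil => cases hat
        | cons d t' =>
            rcases hct d (by simp) with rfl | rfl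
            · have : t' = [] := by
                cases t' with
                | nil => rfl
                | cons e t'' =>
                    rcases hct e (by simp) with rfl | rfl
                    · exact absurd (by simp) (List.nodup_cons.mp hcn.2).1
                    · exact absurd (by simp) hcn.1
              rw [this]
            · exact absurd (by simp) hcn.1

lemma prefix_pair {p : List ℕ} {a b : ℕ} (h : p <+: [a, b]) :
    p = [] ∨ p = [a] ∨ p = [a, b] := by
  obtain ⟨s, hs⟩ := h
  match p, hs with
  | [], _ => exact Or.inl rfl
  | [x], hs => simp_all
  | [x, y], hs => simp_all
  | x :: y :: z :: t, hs => simp at hs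

lemma prefix_single {p : List ℕ} {a : ℕ} (h : p <+: [a]) : p = [] ∨ p = [a] := by
  obtain ⟨s, hs⟩ := h
  match p, hs with
  | [], _ => exact Or.inl rfl
  | [x], hs => simp_all
  | x :: y :: t, hs => simp at hs
lemma etaNormal_HT (n : ℕ) (τ : Ty) :
    EtaNormal (Tm.app (Tm.app (Tm.fvar n τ) (Tm.bvar 1)) (Tm.bvar 0)) := by
  intro u h
  cases h with
  | appL h' =>
      cases h' with
      | appL h'' => cases h''
      | appR h'' => cases h''
  | appR h' => cases h'

lemma niceArg_HT (n : ℕ) (τ : Ty) :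
    NiceArg (Tm.app (Tm.app (Tm.fvar n τ) (Tm.bvar 1)) (Tm.bvar 0)) :=
  ⟨etaNormal_HT n τ, ⟨n, τ, rfl⟩, isSuperpattern_HT n τ⟩

lemma maxpos_char {Yn z : ℕ} {τY τz : Ty} {A B : Tm}
    (hA : A = Tm.fvar z τz ∨ RepPos (Tm.app (Tm.app (Tm.fvar Yn τY) A) B) [0, 1])
    (hB : B = Tm.fvar z τz ∨ RepPos (Tm.app (Tm.app (Tm.fvar Yn τY) A) B) [1])
    (q : List ℕ) :
    MaxPos (Tm.app (Tm.app (Tm.fvar Yn τY) A) B) q ↔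
      ((q = [0, 1] ∧ RepPos (Tm.app (Tm.app (Tm.fvar Yn τY) A) B) [0, 1]) ∨
       (q = [1] ∧ RepPos (Tm.app (Tm.app (Tm.fvar Yn τY) A) B) [1])) := by
  have hroot : ¬ RepPos (Tm.app (Tm.app (Tm.fvar Yn τY) A) B) [] :=
    not_rep_of_head_fvar rfl rfl
  have h0 : ¬ RepPos (Tm.app (Tm.app (Tm.fvar Yn τY) A) B) [0] :=
    not_rep_of_head_fvar rfl rfl
  have h00 : ¬ RepPos (Tm.app (Tm.app (Tm.fvar Yn τY) A) B) [0, 0] :=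
    not_rep_of_head_fvar rfl rfl
  constructor
  · rintro ⟨hrep, hmax⟩
    obtain _ | ⟨a, q'⟩ := q
    · exact absurd hrep hroot
    obtain _ | _ | a := a
    · obtain _ | ⟨b, q''⟩ := q'
      · exact absurd hrep h0
      obtain _ | _ | b := b
      · obtain _ | ⟨c, t⟩ := q''
        · exact absurd hrep h00
        · exact absurd hrep (not_rep_none (by rcases c with _ | _ | c <;> rfl))
      · obtain _ | ⟨c, t⟩ := q''
        · exact Or.inl ⟨rfl, hrep⟩
        · rcases hA with rfl | hA
          · exact absurd hrep (not_rep_none (by rcases c with _ | _ | c <;> rfl))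
          · exact absurd hA (hmax [0, 1] ⟨c :: t, rfl⟩ (by simp))
      · exact absurd hrep (not_rep_none rfl)
    · obtain _ | ⟨c, t⟩ := q'
      · exact Or.inr ⟨rfl, hrep⟩
      · rcases hB with rfl | hB
        · exact absurd hrep (not_rep_none (by rcases c with _ | _ | c <;> rfl))
        · exact absurd hB (hmax [1] ⟨c :: t, rfl⟩ (by simp))
    · exact absurd hrep (not_rep_none rfl)
  · rintro (⟨rfl, hrep⟩ | ⟨rfl, hrep⟩)
    · refine ⟨hrep, ?_⟩
      intro p hp hne
      rcases prefix_pair hp with rfl | rfl | rfl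
      · exact hroot
      · exact h0
      · exact absurd rfl hne
    · refine ⟨hrep, ?_⟩
      intro p hp hne
      rcases prefix_single hp with rfl | rfl
      · exact hroot
      · exact absurd rfl hne

lemma appList_head_ty : ∀ (l : List Tm) (Γ : List Ty) (h : Tm) (τ : Ty),
    HasType Γ (appList h l) τ → ∃ σ, HasType Γ h σ := by
  intro l
  induction l with
  | nil => intro Γ h τ ht; exact ⟨τ, ht⟩
  | cons x t ih =>
      intro Γ h τ ht
      rw [appList_cons] at ht
      obtain ⟨σ, hσ⟩ := ih _ _ _ ht
      cases hσ with
      | app h1 h2 => exact ⟨_, h1⟩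

lemma tight_args_nil {z : ℕ} {args : List Tm}
    (hty : HasType [] (tightForm z [] args) ty2) : args = [] := by
  cases args with
  | nil => rfl
  | cons a rest =>
      exfalso
      unfold tightForm at hty
      cases hty with
      | lam h1 =>
          cases h1 with
          | lam h2 =>
              cases h2 with
              | app hf hin =>
                  rw [appList_cons] at hin
                  obtain ⟨σ, hσ⟩ := appList_head_ty _ _ _ _ hin
                  cases hσ with
                  | app h1 h2 => cases h1

lemma subAt_nil (t : Tm) : subAt t [] = some t := by cases t <;> rfl
lemma subAt_app0 (a b : Tm) (p : List ℕ) : subAt (Tm.app a b) (0 :: p) = subAt a p := rfl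
lemma subAt_app1 (a b : Tm) (p : List ℕ) : subAt (Tm.app a b) (1 :: p) = subAt b p := rfl
lemma replaceAt_nil (t u : Tm) : replaceAt t [] u = u := by cases t <;> rfl

/-- for a `Λ`-tight generalization `g` of `s` and `t`,
`(σ₁,σ₂) ∈ GS_gnd(s,t,g)` and fresh `Y`, the `(g,Λ_sp)`-pseudo-pattern
`G_{Λ_sp}(g,Z,Y,σ₁,σ₂)` is a superpattern, i.e. an element of `Λ_sp`. -/
theorem sp_pseudo_pattern_is_superpattern
    (z Y : ℕ) (δs : List Ty) (args : List Tm) (σ₁ σ₂ : Subst)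
    (htight : IsTight ΛAll (tightForm z δs args))
    (hgs : GSgnd (tightForm z δs args) σ₁ σ₂)
    (hYfresh : ∀ τ, occFV Y τ (tightForm z δs args) = 0)
    (r' : Tm)
    (hlift : LiftOf
      (fvBound (pseudoPat z Y δs args
        (σ₁.map z (mkArrow δs Ty.base)) (σ₂.map z (mkArrow δs Ty.base))))
      (pseudoArg z Y δs args
        (σ₁.map z (mkArrow δs Ty.base)) (σ₂.map z (mkArrow δs Ty.base))) r') :
    IsSuperpattern (Tm.lam Ty.base (Tm.lam Ty.base (Tm.app fC r'))) := by
  obtain ⟨⟨⟨-, hty, -⟩, -⟩, -⟩ := htight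
  obtain ⟨-, -, hg1, hg2⟩ := hgs
  obtain ⟨qs, names, hqnd, hnnd, hlen, -, hmem, hr'⟩ := hlift
  cases δs with
  | cons δ0 rest =>
      set A := σ₁.map z (mkArrow (δ0 :: rest) Ty.base) with hAdef
      set B := σ₂.map z (mkArrow (δ0 :: rest) Ty.base) with hBdef
      set r := pseudoArg z Y (δ0 :: rest) args A B with hrdef
      have hsl : SpineLam r := by
        rw [hrdef]
        unfold pseudoArg
        rw [subst1_appList]
        apply spineLam_appList
        have hz : subst1 z (mkArrow (δ0 :: rest) Ty.base)
            (pseudoBody Y (δ0 :: rest) A B) (Tm.fvar z (mkArrow (δ0 :: rest) Ty.base)) =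
            pseudoBody Y (δ0 :: rest) A B := by
          simp [subst1]
        rw [hz]
        apply SpineLam.base
        unfold pseudoBody
        simp only [List.length_cons]
        obtain ⟨a, b, hab⟩ := appBVars_succ_isApp (shift (rest.length + 1) 0 B) rest.length
        rw [hab]
        exact lamSpine_mkLams rest δ0 _ _ _
      have hrep : RepPos r [] := by
        obtain ⟨u', hred, hnf⟩ := exists_etanf r
        obtain ⟨τ, hτ⟩ := spineLam_head (spineLam_etaRed hsl hred)
        exact ⟨r, u', subAt_nil r, ⟨hred, hnf⟩, Or.inl ⟨τ, hτ⟩⟩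
      have hiff : ∀ x, MaxPos r x ↔ x = [] := by
        intro x
        constructor
        · intro hm
          by_contra hne
          exact not_max_of_ne_nil hrep hne hm
        · rintro rfl
          exact ⟨hrep, fun p hp hne => absurd (List.prefix_nil.mp hp) hne⟩
      have hqs : qs = [[]] := list_eq_singleton hqnd fun x => (hmem x).trans (hiff x)
      obtain ⟨nm, hnm⟩ : ∃ nm, names = [nm] :=
        List.length_eq_one_iff.mp (by rw [hlen, hqs]; rfl)
      rw [hqs, hnm] at hr'
      simp only [List.zip_cons_cons, List.zip_nil_right, List.foldl_cons,
        List.foldl_nil, replaceAt_nil] at hr'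
      rw [hr']
      unfold liftReplacement
      exact isSuperpattern_lam (isSuperpattern_lam (isSuperpattern_fapp
        (isSuperpattern_HT _ _)))
  | nil =>
      have hargs : args = [] := tight_args_nil hty
      subst hargs
      set A := σ₁.map z (mkArrow [] Ty.base) with hAdef
      set B := σ₂.map z (mkArrow [] Ty.base) with hBdef
      have hpa : pseudoArg z Y [] [] A B = Tm.app (Tm.app (Tm.fvar Y ty2) A) B := by
        simp [pseudoArg, appList, subst1, pseudoBody, mkLams, appBVars, shift_zero]
      rw [hpa] at hmem hr'
      have hAc : A = Tm.fvar z (mkArrow [] Ty.base) ∨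
          RepPos (Tm.app (Tm.app (Tm.fvar Y ty2) A) B) [0, 1] := by
        by_cases hA0 : A = Tm.fvar z (mkArrow [] Ty.base)
        · exact Or.inl hA0
        · right
          have hnf0 : NoFV A := hg1 z (mkArrow [] Ty.base) hA0
          have hcl : ClosedAt 0 A := by
            simpa using closedAt_of_hasType (σ₁.wt z (mkArrow [] Ty.base))
          obtain ⟨A', hred, hnf⟩ := exists_etanf A
          exact ⟨A, A', by rw [subAt_app0, subAt_app1, subAt_nil], ⟨hred, hnf⟩,
            head_of_closed_ground A' (etaRed_closedAt hred 0 hcl) (etaRed_noFV hred hnf0)⟩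
      have hBc : B = Tm.fvar z (mkArrow [] Ty.base) ∨
          RepPos (Tm.app (Tm.app (Tm.fvar Y ty2) A) B) [1] := by
        by_cases hB0 : B = Tm.fvar z (mkArrow [] Ty.base)
        · exact Or.inl hB0
        · right
          have hnf0 : NoFV B := hg2 z (mkArrow [] Ty.base) hB0
          have hcl : ClosedAt 0 B := by
            simpa using closedAt_of_hasType (σ₂.wt z (mkArrow [] Ty.base))
          obtain ⟨B', hred, hnf⟩ := exists_etanf B
          exact ⟨B, B', by rw [subAt_app1, subAt_nil], ⟨hred, hnf⟩,
            head_of_closed_ground B' (etaRed_closedAt hred 0 hcl) (etaRed_noFV hred hnf0)⟩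
      have char := maxpos_char hAc hBc
      by_cases hRA : RepPos (Tm.app (Tm.app (Tm.fvar Y ty2) A) B) [0, 1] <;>
        by_cases hRB : RepPos (Tm.app (Tm.app (Tm.fvar Y ty2) A) B) [1]
      · -- both replaced
        have hiff : ∀ x, x ∈ qs ↔ (x = [0, 1] ∨ x = [1]) := by
          intro x
          rw [hmem x, char x]
          simp [hRA, hRB]
        have hNA : ∀ (n : ℕ) (q : List ℕ), NiceArg (liftReplacement
            (Tm.app (Tm.app (Tm.fvar Y ty2) A) B) q n) := by
          intro n q
          unfold liftReplacement
          exact niceArg_HT _ _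
        rcases list_eq_pair hqnd (by simp) hiff with hqs | hqs <;>
        · obtain ⟨n1, n2, hnm⟩ : ∃ n1 n2, names = [n1, n2] :=
            List.length_eq_two.mp (by rw [hlen, hqs]; rfl)
          rw [hqs, hnm] at hr'
          simp only [List.zip_cons_cons, List.zip_nil_right, List.foldl_cons,
            List.foldl_nil, replaceAt, replaceAt_nil] at hr'
          rw [hr']
          exact isSuperpattern_lam (isSuperpattern_lam (isSuperpattern_fapp
            (isSuperpattern_YAB (hNA _ _) (hNA _ _))))
      · -- only A replaced
        have hBf : B = Tm.fvar z (mkArrow [] Ty.base) := by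
          rcases hBc with h | h
          · exact h
          · exact absurd h hRB
        have hiff : ∀ x, x ∈ qs ↔ x = [0, 1] := by
          intro x
          rw [hmem x, char x]
          simp [hRA, hRB]
        have hqs : qs = [[0, 1]] := list_eq_singleton hqnd hiff
        obtain ⟨nm, hnm⟩ : ∃ nm, names = [nm] :=
          List.length_eq_one_iff.mp (by rw [hlen, hqs]; rfl)
        rw [hqs, hnm] at hr'
        simp only [List.zip_cons_cons, List.zip_nil_right, List.foldl_cons,
          List.foldl_nil, replaceAt, replaceAt_nil] at hr'
        rw [hr']
        refine isSuperpattern_lam (isSuperpattern_lam (isSuperpattern_fapp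
          (isSuperpattern_YAB ?_ ?_)))
        · unfold liftReplacement; exact niceArg_HT _ _
        · rw [hBf]; exact niceArg_fvar _ _
      · -- only B replaced
        have hAf : A = Tm.fvar z (mkArrow [] Ty.base) := by
          rcases hAc with h | h
          · exact h
          · exact absurd h hRA
        have hiff : ∀ x, x ∈ qs ↔ x = [1] := by
          intro x
          rw [hmem x, char x]
          simp [hRA, hRB]
        have hqs : qs = [[1]] := list_eq_singleton hqnd hiff
        obtain ⟨nm, hnm⟩ : ∃ nm, names = [nm] :=
          List.length_eq_one_iff.mp (by rw [hlen, hqs]; rfl)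
        rw [hqs, hnm] at hr'
        simp only [List.zip_cons_cons, List.zip_nil_right, List.foldl_cons,
          List.foldl_nil, replaceAt, replaceAt_nil] at hr'
        rw [hr']
        refine isSuperpattern_lam (isSuperpattern_lam (isSuperpattern_fapp
          (isSuperpattern_YAB ?_ ?_)))
        · rw [hAf]; exact niceArg_fvar _ _
        · unfold liftReplacement; exact niceArg_HT _ _
      · -- nothing replaced
        have hAf : A = Tm.fvar z (mkArrow [] Ty.base) := by
          rcases hAc with h | h
          · exact h
          · exact absurd h hRA
        have hBf : B = Tm.fvar z (mkArrow [] Ty.base) := by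
          rcases hBc with h | h
          · exact h
          · exact absurd h hRB
        have hqs : qs = [] := by
          rw [List.eq_nil_iff_forall_not_mem]
          intro x hx
          rcases (char x).mp ((hmem x).mp hx) with ⟨-, h⟩ | ⟨-, h⟩
          · exact hRA h
          · exact hRB h
        rw [hqs] at hr'
        simp only [List.zip_nil_left, List.foldl_nil] at hr'
        rw [hr']
        refine isSuperpattern_lam (isSuperpattern_lam (isSuperpattern_fapp
          (isSuperpattern_YAB ?_ ?_)))
        · rw [hAf]; exact niceArg_fvar _ _
        · rw [hBf]; exact niceArg_fvar _ _

end AU
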